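/- (Theorem 4.1) Suppose (A,b) is symplectic with b_i ≠ 0 for all i, and there exists an invertible real n×n matrix P with P·K·P^{−1} = −Kᵀ and P·Dg(y)·P^{−1} = −Dg(y)ᵀ for all y ∈ ℝ^n. Then at every point y ∈ ℝ^n where I_{sn} − h·Ā·F(y) is invertible, the special symplectic exponential integrator satisfies det(Dφ_h(y)) = 1; that is, it preserves volume for vector fields of class 𝓗. -/

import Mathlib

open Matrix

/-- The Jacobian matrix of a map `f : ℝ^ι → ℝ^ι` at a point `y`. -/
noncomputable def jac {ι : Type*} [Fintype ι] [DecidableEq ι]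
    (f : (ι → ℝ) → (ι → ℝ)) (y : ι → ℝ) : Matrix ι ι ℝ :=
  LinearMap.toMatrix' ((fderiv ℝ f y).toLinearMap)

/-- A Runge–Kutta pair `(A, b)` is symplectic. -/
def IsSymplecticRK {s : ℕ} (A : Matrix (Fin s) (Fin s) ℝ) (b : Fin s → ℝ) : Prop :=
  ∀ i j, b i * A i j + b j * A j i - b i * b j = 0

/-!
Differentiating the stage equations gives `(I - hĀF) · col(Dkᵢ) = col(exp(cᵢhK))` and
`Dφ = exp(hK) + row(h bᵢ exp((1 - cᵢ)hK) Jᵢ) · col(Dkᵢ)`, with `Jᵢ = Dg(kᵢ)`. By the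
Weinstein–Aronszajn identity, `det Dφ · det(I - hĀF) = det exp(hK) · det(I - h(Ā - B̄)F)`, where
`B̄` has blocks `b_j exp((cᵢ - c_j)hK)`. Since `P exp(tK) = exp(-tK)ᵀ P` and `P J = -Jᵀ P`,
conjugating by `diag(bᵢ P)` carries `I - h(Ā - B̄)F` to `(I - hFĀ)ᵀ` precisely because `(A, b)`
is symplectic, so both determinants agree. Finally `det exp(hK) = det exp(-hK)` by conjugation
with `P`, and it is positive, being the square of `det exp(hK/2)`; hence it is `1`.
-/

section Jacobian

variable {ι m : Type*} [Fintype ι] [Fintype m] [DecidableEq m]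

theorem jac_eq_of_hasFDerivAt {f : (m → ℝ) → (m → ℝ)} {f' : (m → ℝ) →L[ℝ] (m → ℝ)}
    {y : m → ℝ} (hf : HasFDerivAt f f' y) : jac f y = LinearMap.toMatrix' f' := by
  rw [jac, hf.fderiv]

theorem jac_mulVec_add_smul_sum (M : Matrix m m ℝ) (h : ℝ) (N : ι → Matrix m m ℝ)
    {g : (m → ℝ) → (m → ℝ)} {u : ι → (m → ℝ) → (m → ℝ)} {y : m → ℝ}
    (hg : ∀ i, DifferentiableAt ℝ g (u i y)) (hu : ∀ i, DifferentiableAt ℝ (u i) y) :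
    jac (fun z => M *ᵥ z + h • ∑ i, N i *ᵥ g (u i z)) y
      = M + h • ∑ i, N i * (jac g (u i y) * jac (u i) y) := by
  have hN : ∀ i, HasFDerivAt (fun z => N i *ᵥ g (u i z))
      ((toLin' (N i)).toContinuousLinearMap.comp
        ((fderiv ℝ g (u i y)).comp (fderiv ℝ (u i) y))) y := fun i =>
    (toLin' (N i)).toContinuousLinearMap.hasFDerivAt.comp y
      ((hg i).hasFDerivAt.comp y (hu i).hasFDerivAt)
  have hf : HasFDerivAt (fun z => M *ᵥ z + h • ∑ i, N i *ᵥ g (u i z)) _ y :=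
    (toLin' M).toContinuousLinearMap.hasFDerivAt.add
      ((HasFDerivAt.fun_sum fun i _ => hN i).const_smul h)
  rw [jac_eq_of_hasFDerivAt hf]
  simp [jac, LinearMap.toMatrix'_comp]

end Jacobian

namespace Matrix

theorem mul_eq_neg_transpose_mul {m : Type*} [Fintype m] [DecidableEq m]
    {P L : Matrix m m ℝ} (hP : IsUnit P) (hL : P * L * P⁻¹ = -Lᵀ) : P * L = -(Lᵀ * P) := by
  rw [← Matrix.neg_mul, ← hL, Matrix.mul_assoc _ P⁻¹,
    nonsing_inv_mul _ ((isUnit_iff_isUnit_det _).mp hP), Matrix.mul_one]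

section Exponential

variable {m : Type*} [Fintype m] [DecidableEq m]

theorem exp_smul_mul_exp_smul (K : Matrix m m ℝ) (a b : ℝ) :
    NormedSpace.exp (a • K) * NormedSpace.exp (b • K) = NormedSpace.exp ((a + b) • K) := by
  rw [add_smul, Matrix.exp_add_of_commute _ _ ((Commute.refl K).smul_left a |>.smul_right b)]

theorem det_exp_smul_pos (K : Matrix m m ℝ) (t : ℝ) : 0 < (NormedSpace.exp (t • K)).det := by
  have hne : (NormedSpace.exp ((t / 2) • K)).det ≠ 0 :=
    ((isUnit_iff_isUnit_det _).mp (Matrix.isUnit_exp ((t / 2) • K))).ne_zero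
  have hsq : NormedSpace.exp (t • K) =
      NormedSpace.exp ((t / 2) • K) * NormedSpace.exp ((t / 2) • K) := by
    rw [exp_smul_mul_exp_smul, add_halves]
  rw [hsq, det_mul]
  exact mul_self_pos.mpr hne

variable {K P : Matrix m m ℝ}

theorem mul_exp_smul_of_conj_eq_neg_transpose (hP : IsUnit P) (hK : P * K * P⁻¹ = -Kᵀ)
    (t : ℝ) : P * NormedSpace.exp (t • K) = (NormedSpace.exp ((-t) • K))ᵀ * P := by
  obtain ⟨U, rfl⟩ := hP
  have hconj := Matrix.exp_units_conj U (t • K)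
  rw [coe_units_inv, mul_smul_comm, smul_mul_assoc, hK, smul_neg, ← transpose_smul,
    ← transpose_neg, ← neg_smul, exp_transpose] at hconj
  rw [hconj, Matrix.mul_assoc, nonsing_inv_mul _ ((isUnit_iff_isUnit_det _).mp U.isUnit),
    Matrix.mul_one]

theorem det_exp_smul_eq_one (hP : IsUnit P) (hK : P * K * P⁻¹ = -Kᵀ) (t : ℝ) :
    (NormedSpace.exp (t • K)).det = 1 := by
  have hsymm : (NormedSpace.exp ((-t) • K)).det = (NormedSpace.exp (t • K)).det := by
    have := congrArg det (mul_exp_smul_of_conj_eq_neg_transpose hP hK t)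
    rw [det_mul, det_mul, det_transpose, mul_comm] at this
    exact (mul_right_cancel₀ ((isUnit_iff_isUnit_det _).mp hP).ne_zero this).symm
  have hprod : (NormedSpace.exp (t • K)).det * (NormedSpace.exp ((-t) • K)).det = 1 := by
    rw [← det_mul, exp_smul_mul_exp_smul, add_neg_cancel, zero_smul, NormedSpace.exp_zero,
      det_one]
  rw [hsymm] at hprod
  nlinarith [det_exp_smul_pos K t]

end Exponential

theorem det_add_mul_mul_det_of_mul_eq {m n α : Type*} [Fintype m] [DecidableEq m] [Fintype n]
    [DecidableEq n] [CommRing α] {M : Matrix m m α} {C E : Matrix m n α} (hME : M * C = E)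
    {X Y : Matrix n n α} (hXY : X * Y = 1) (W : Matrix n m α) :
    (X + W * C).det * M.det = X.det * (M + E * (Y * W)).det := by
  have hX : X + W * C = X * (1 + Y * W * C) := by
    rw [Matrix.mul_add, Matrix.mul_one, ← Matrix.mul_assoc, ← Matrix.mul_assoc, hXY,
      Matrix.one_mul]
  rw [hX, det_mul, det_one_add_mul_comm, mul_assoc, mul_comm _ M.det, ← det_mul,
    Matrix.mul_add, Matrix.mul_one, ← Matrix.mul_assoc, hME]

section Comp

variable {ι m α : Type*} [Fintype ι] [Fintype m]

theorem comp_mul [Semiring α] (X Y : Matrix ι ι (Matrix m m α)) :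
    comp ι ι m m α (X * Y) = comp ι ι m m α X * comp ι ι m m α Y :=
  map_mul (compRingEquiv ι m α) X Y

theorem comp_one_sub_smul_mul [DecidableEq ι] [DecidableEq m] [CommRing α] (h : α)
    (X Y : Matrix ι ι (Matrix m m α)) :
    comp ι ι m m α (1 - h • (X * Y)) = 1 - h • (comp ι ι m m α X * comp ι ι m m α Y) := by
  show compAlgEquiv ι m α α _ = 1 - h • (compAlgEquiv ι m α α X * compAlgEquiv ι m α α Y)
  rw [map_sub, map_one, map_smul, map_mul]

end Comp

section BlockColRow

variable {ι m α : Type*} [Fintype m] [CommSemiring α]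

def blockCol (v : ι → Matrix m m α) : Matrix (ι × m) m α := of fun p j => v p.1 p.2 j

def blockRow (v : ι → Matrix m m α) : Matrix m (ι × m) α := of fun i q => v q.1 i q.2

theorem blockCol_mul_blockRow (u v : ι → Matrix m m α) :
    blockCol u * blockRow v = comp ι ι m m α (vecMulVec u v) := by
  ext ⟨i, x⟩ ⟨j, z⟩
  simp [blockCol, blockRow, mul_apply, vecMulVec]

theorem mul_blockRow (X : Matrix m m α) (v : ι → Matrix m m α) :
    X * blockRow v = blockRow fun i => X * v i := by
  ext x ⟨j, z⟩
  simp [blockRow, mul_apply]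

variable [Fintype ι]

theorem comp_mul_blockCol (M : Matrix ι ι (Matrix m m α)) (v : ι → Matrix m m α) :
    comp ι ι m m α M * blockCol v = blockCol (M *ᵥ v) := by
  ext ⟨i, x⟩ z
  simp [blockCol, mul_apply, mulVec, dotProduct, Fintype.sum_prod_type, sum_apply]

theorem blockRow_mul_blockCol (u v : ι → Matrix m m α) :
    blockRow u * blockCol v = u ⬝ᵥ v := by
  ext x z
  simp [blockCol, blockRow, mul_apply, dotProduct, Fintype.sum_prod_type, sum_apply]

end BlockColRow

end Matrix

section StageMatrix

variable {ι m : Type*} [Fintype ι] [DecidableEq ι] [Fintype m] [DecidableEq m]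

/-- Under `Matrix.comp`, this is the paper's `I - h·Ā·F(y)` when `E i j = exp((cᵢ - c_j)hK)` and
`J i = Dg(kᵢ(y))`. -/
def stageMatrix (A : Matrix ι ι ℝ) (E : ι → ι → Matrix m m ℝ) (J : ι → Matrix m m ℝ) (h : ℝ) :
    Matrix ι ι (Matrix m m ℝ) :=
  1 - h • (of (fun i j => A i j • E i j) * diagonal J)

variable {A : Matrix ι ι ℝ} {E : ι → ι → Matrix m m ℝ} {J : ι → Matrix m m ℝ} {h : ℝ}

theorem stageMatrix_mulVec_of_eq {Kv Ev : ι → Matrix m m ℝ}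
    (hKv : ∀ i, Kv i = Ev i + h • ∑ j, (A i j • E i j) * (J j * Kv j)) :
    stageMatrix A E J h *ᵥ Kv = Ev := by
  funext i
  rw [stageMatrix, sub_mulVec, one_mulVec, Pi.sub_apply, sub_eq_iff_eq_add, hKv i]
  simp [mulVec, dotProduct, mul_diagonal, Finset.smul_sum, Matrix.mul_assoc]

theorem stageMatrix_add_vecMulVec {Ev E' : ι → Matrix m m ℝ} {Y : Matrix m m ℝ}
    (hE : ∀ i j, Ev i * Y * E' j = E i j) (b : ι → ℝ) :
    stageMatrix A E J h + vecMulVec Ev (fun j => Y * (h • (b j • E' j) * J j)) =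
      stageMatrix (A - replicateRow ι b) E J h := by
  refine Matrix.ext fun i j => ?_
  simp only [stageMatrix, Matrix.add_apply, Matrix.sub_apply, Matrix.smul_apply, mul_diagonal,
    of_apply, vecMulVec_apply, replicateRow_apply, smul_mul_assoc, mul_smul_comm,
    ← Matrix.mul_assoc, hE]
  module

end StageMatrix

section Symplectic

variable {s : ℕ} {m : Type*} [Fintype m] [DecidableEq m] {A : Matrix (Fin s) (Fin s) ℝ}
  {b : Fin s → ℝ} {P : Matrix m m ℝ} {E : Fin s → Fin s → Matrix m m ℝ}
  {J : Fin s → Matrix m m ℝ}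

theorem diagonal_mul_stageMatrix_sub_replicateRow (hsymp : IsSymplecticRK A b)
    (hE : ∀ i j, P * E i j = (E j i)ᵀ * P) (hJ : ∀ j, P * J j = -((J j)ᵀ * P)) (h : ℝ) :
    diagonal (fun i => b i • P) * stageMatrix (A - replicateRow (Fin s) b) E J h
      = (1 - h • (diagonal J * of (fun i j => A i j • E i j)))ᵀ.map transpose
        * diagonal (fun i => b i • P) := by
  have hPEJ : ∀ i j, P * (E i j * J j) = -((J j * E j i)ᵀ * P) := fun i j => by
    rw [← Matrix.mul_assoc, hE, Matrix.mul_assoc, hJ, transpose_mul, Matrix.mul_neg,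
      Matrix.mul_assoc]
  refine Matrix.ext fun i j => ?_
  simp only [stageMatrix, diagonal_mul, mul_diagonal, Matrix.sub_apply, Matrix.smul_apply,
    of_apply, replicateRow_apply, map_apply, transpose_apply, transpose_sub, transpose_smul,
    transpose_mul, mul_sub, sub_mul, smul_mul_assoc, mul_smul_comm, smul_smul, hPEJ]
  rcases eq_or_ne i j with rfl | hij
  · rw [one_apply_eq, transpose_one, mul_one, one_mul]
    linear_combination (norm := module) (h * hsymp i i) • ((E i i)ᵀ * (J i)ᵀ * P)
  · rw [one_apply_ne hij, one_apply_ne hij.symm, transpose_zero, mul_zero, zero_mul]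
    linear_combination (norm := module) (h * hsymp i j) • ((E j i)ᵀ * (J j)ᵀ * P)

theorem det_comp_stageMatrix_sub_replicateRow (hsymp : IsSymplecticRK A b) (hb : ∀ i, b i ≠ 0)
    (hP : IsUnit P) (hE : ∀ i j, P * E i j = (E j i)ᵀ * P) (hJ : ∀ j, P * J j = -((J j)ᵀ * P))
    (h : ℝ) :
    (comp _ _ _ _ ℝ (stageMatrix (A - replicateRow (Fin s) b) E J h)).det
      = (comp _ _ _ _ ℝ (stageMatrix A E J h)).det := by
  have hD : (comp _ _ _ _ ℝ (diagonal fun i => b i • P)).det ≠ 0 := by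
    refine ((isUnit_iff_isUnit_det _).mp (IsUnit.of_mul_eq_one
      (comp _ _ _ _ ℝ (diagonal fun i => (b i)⁻¹ • P⁻¹)) ?_)).ne_zero
    rw [← comp_mul, diagonal_mul_diagonal, ← comp_one, ← diagonal_one]
    congr 2
    funext i
    rw [smul_mul_smul, mul_inv_cancel₀ (hb i),
      mul_nonsing_inv _ ((isUnit_iff_isUnit_det _).mp hP), one_smul]
  have hDN := congrArg (fun X => (comp _ _ _ _ ℝ X).det)
    (diagonal_mul_stageMatrix_sub_replicateRow hsymp hE hJ h)
  simp only [comp_mul, det_mul, ← transpose_comp, det_transpose] at hDN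
  rw [mul_left_cancel₀ hD (hDN.trans (mul_comm _ _)), stageMatrix, comp_one_sub_smul_mul,
    comp_one_sub_smul_mul, ← smul_mul_assoc, det_one_sub_mul_comm, mul_smul_comm]

theorem det_update_eq_one_of_isSymplecticRK (hsymp : IsSymplecticRK A b) (hb : ∀ i, b i ≠ 0)
    (hP : IsUnit P) (hE : ∀ i j, P * E i j = (E j i)ᵀ * P) (hJ : ∀ j, P * J j = -((J j)ᵀ * P))
    {h : ℝ} {X Y : Matrix m m ℝ} (hXY : X * Y = 1) (hX : X.det = 1)
    {Ev E' : Fin s → Matrix m m ℝ} (hEY : ∀ i j, Ev i * Y * E' j = E i j)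
    {Kv : Fin s → Matrix m m ℝ}
    (hKv : ∀ i, Kv i = Ev i + h • ∑ j, (A i j • E i j) * (J j * Kv j))
    (hM : IsUnit (comp _ _ _ _ ℝ (stageMatrix A E J h))) :
    (X + h • ∑ i, (b i • E' i) * (J i * Kv i)).det = 1 := by
  set W := blockRow fun i => h • (b i • E' i) * J i
  have hupdate : X + h • ∑ i, (b i • E' i) * (J i * Kv i) = X + W * blockCol Kv := by
    rw [blockRow_mul_blockCol, dotProduct, Finset.smul_sum]
    simp [Matrix.mul_assoc]
  have hstage : comp _ _ _ _ ℝ (stageMatrix A E J h) * blockCol Kv = blockCol Ev := by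
    rw [comp_mul_blockCol, stageMatrix_mulVec_of_eq hKv]
  have hperturb : comp _ _ _ _ ℝ (stageMatrix A E J h) + blockCol Ev * (Y * W) =
      comp _ _ _ _ ℝ (stageMatrix (A - replicateRow (Fin s) b) E J h) := by
    rw [mul_blockRow, blockCol_mul_blockRow, ← stageMatrix_add_vecMulVec hEY]
    rfl
  have key := det_add_mul_mul_det_of_mul_eq hstage hXY W
  rw [hperturb, det_comp_stageMatrix_sub_replicateRow hsymp hb hP hE hJ, hX, one_mul] at key
  rw [hupdate]
  exact mul_right_cancel₀ ((isUnit_iff_isUnit_det _).mp hM).ne_zero (key.trans (one_mul _).symm)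

end Symplectic

theorem det_exp_update_eq_one {s : ℕ} {m : Type*} [Fintype m] [DecidableEq m]
    {A : Matrix (Fin s) (Fin s) ℝ} {b : Fin s → ℝ} (hsymp : IsSymplecticRK A b)
    (hb : ∀ i, b i ≠ 0) {P K : Matrix m m ℝ} (hP : IsUnit P) (hK : P * K * P⁻¹ = -Kᵀ)
    {J : Fin s → Matrix m m ℝ} (hJ : ∀ j, P * J j * P⁻¹ = -(J j)ᵀ) {c : Fin s → ℝ} {h : ℝ}
    {Kv : Fin s → Matrix m m ℝ}
    (hKv : ∀ i, Kv i = NormedSpace.exp ((c i * h) • K) +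
      h • ∑ j, (A i j • NormedSpace.exp (((c i - c j) * h) • K)) * (J j * Kv j))
    (hM : IsUnit (comp _ _ _ _ ℝ
      (stageMatrix A (fun i j => NormedSpace.exp (((c i - c j) * h) • K)) J h))) :
    (NormedSpace.exp (h • K) +
      h • ∑ i, (b i • NormedSpace.exp (((1 - c i) * h) • K)) * (J i * Kv i)).det = 1 := by
  refine det_update_eq_one_of_isSymplecticRK hsymp hb hP (fun i j => ?_)
    (fun j => mul_eq_neg_transpose_mul hP (hJ j)) (Y := NormedSpace.exp ((-h) • K)) ?_
    (det_exp_smul_eq_one hP hK h) (fun i j => ?_) hKv hM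
  · rw [mul_exp_smul_of_conj_eq_neg_transpose hP hK, neg_mul_eq_neg_mul, neg_sub]
  · rw [exp_smul_mul_exp_smul, add_neg_cancel, zero_smul, NormedSpace.exp_zero]
  · rw [exp_smul_mul_exp_smul, exp_smul_mul_exp_smul]
    congr 2
    ring

/-- **Theorem 4.1.** Special symplectic exponential integrators preserve volume for
vector fields of class `𝓗`. -/
theorem stmt_7 (n s : ℕ) (h : ℝ) (K : Matrix (Fin n) (Fin n) ℝ) (c : Fin s → ℝ)
    (g : (Fin n → ℝ) → (Fin n → ℝ)) (hg : Differentiable ℝ g)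
    (A : Matrix (Fin s) (Fin s) ℝ) (b : Fin s → ℝ)
    (hsymp : IsSymplecticRK A b) (hb : ∀ i, b i ≠ 0)
    (P : Matrix (Fin n) (Fin n) ℝ) (hP : IsUnit P)
    (hK : P * K * P⁻¹ = -Kᵀ)
    (hgH : ∀ y, P * jac g y * P⁻¹ = -(jac g y)ᵀ)
    (k : Fin s → (Fin n → ℝ) → (Fin n → ℝ))
    (hk : ∀ i, Differentiable ℝ (k i))
    (hkdef : ∀ i y, k i y =
      (NormedSpace.exp ((c i * h) • K)).mulVec y +
        h • ∑ j, (A i j • NormedSpace.exp (((c i - c j) * h) • K)).mulVec (g (k j y)))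
    (φ : (Fin n → ℝ) → (Fin n → ℝ))
    (hφ : ∀ y, φ y =
      (NormedSpace.exp (h • K)).mulVec y +
        h • ∑ i, (b i • NormedSpace.exp (((1 - c i) * h) • K)).mulVec (g (k i y)))
    (F : (Fin n → ℝ) → Matrix (Fin s × Fin n) (Fin s × Fin n) ℝ)
    (hF : ∀ y p q, F y p q = if p.1 = q.1 then jac g (k p.1 y) p.2 q.2 else 0)
    (Ablk : Matrix (Fin s × Fin n) (Fin s × Fin n) ℝ)
    (hAblk : ∀ p q, Ablk p q =
      A p.1 q.1 * NormedSpace.exp (((c p.1 - c q.1) * h) • K) p.2 q.2) :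
    ∀ y : Fin n → ℝ,
      IsUnit ((1 : Matrix (Fin s × Fin n) (Fin s × Fin n) ℝ) - h • (Ablk * F y)) →
        (jac φ y).det = 1 := by
  intro y hM
  have hstage : ∀ i, jac (k i) y = NormedSpace.exp ((c i * h) • K) +
      h • ∑ j, (A i j • NormedSpace.exp (((c i - c j) * h) • K)) *
        (jac g (k j y) * jac (k j) y) := fun i => by
    rw [show k i = _ from funext (hkdef i)]
    exact jac_mulVec_add_smul_sum _ h _ (fun j => hg _) (fun j => hk j y)
  have hupdate : jac φ y = NormedSpace.exp (h • K) +
      h • ∑ i, (b i • NormedSpace.exp (((1 - c i) * h) • K)) *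
        (jac g (k i y) * jac (k i) y) := by
    rw [show φ = _ from funext hφ]
    exact jac_mulVec_add_smul_sum _ h _ (fun i => hg _) (fun i => hk i y)
  have hAblk' : Ablk = comp _ _ _ _ ℝ
      (of fun i j => A i j • NormedSpace.exp (((c i - c j) * h) • K)) := by
    ext p q
    simp [hAblk]
  have hF' : F y = comp _ _ _ _ ℝ (diagonal fun i => jac g (k i y)) := by
    ext ⟨i, x⟩ ⟨j, z⟩
    by_cases hij : i = j <;> simp [hF, hij]
  rw [hAblk', hF', ← comp_one_sub_smul_mul] at hM
  rw [hupdate]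
  exact det_exp_update_eq_one hsymp hb hP hK (fun j => hgH _) hstage hM
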